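/- Let X be a smooth complex projective variety with Euler characteristic χ(X) = 0. Then the differential d of the Križ model is a morphism of F-modules, i.e. f_* ∘ d = d ∘ f_* for every map of sets f : [n] → [m]. Equivalently, for every such f and every pair i < j with f(i) = f(j) one has f_*(d(G_{i,j})) = χ(X)·[X]_{f(i)} = 0, where [X] is the top cohomology class of X. -/

import Mathlib

/-!
Statement 0: Let `X` be a smooth complex projective variety with `χ(X) = 0`. Then the
differential `d` of the Križ model is a morphism of `F`-modules, i.e.
`f_* ∘ d = d ∘ f_*` for every map of sets `f : [n] → [m]`; equivalently, for every such
`f` and every pair `i < j` with `f i = f j` one has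
`f_*(d(G_{i,j})) = χ(X) · [X]_{f i} = 0`.

The smooth projective variety `X` enters only through its rational cohomology and the
associated Križ model; this data (the cohomology ring `H = H^•(X;ℚ)` with a graded
basis `b` together with the dual basis `b*` for the cup product, the fundamental class
`[X]`, the dgas `E(X,n)` with the classes `x_i = pr_i^* x` and the generators `G_{i,j}`,
the `F`-module structure maps `f_*`, and the differential `d` with `d x_i = 0` and
`d G_{i,j} = Δ_{i,j} = Σ_l (−1)^(deg b_l^*) (b_l)_i (b_l^*)_j`) is packaged in the
structure `KrizModelData` below. The Euler characteristic is
`χ(X) = Σ_r (−1)^r dim H^r = Σ_l (−1)^(deg b_l)`.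
-/

/-- The data of the Križ model `E(X,n)`, `n ∈ ℕ`, of a smooth complex projective
variety `X`, together with its `F`-module structure maps. -/
structure KrizModelData where
  /-- the complex dimension of `X` -/
  dimX : ℕ
  /-- the rational cohomology ring `H^•(X;ℚ)` (graded-commutative, hence a
  possibly noncommutative ring) -/
  H : Type
  [ringH : Ring H]
  [algH : Algebra ℚ H]
  /-- index type of a graded basis of `H^•(X;ℚ)` -/
  ι : Type
  [fintι : Fintype ι]
  /-- a graded basis `{b_l}` of `H^•(X;ℚ)` -/
  b : Module.Basis ι ℚ H
  /-- the (cohomological) degree of each basis element -/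
  bdeg : ι → ℕ
  bdeg_le : ∀ l, bdeg l ≤ 2 * dimX
  /-- the dual basis `{b_l^*}` with respect to the cup product; `deg b_l^* = 2 dim X − deg b_l` -/
  bdual : ι → H
  /-- the fundamental class `[X] ∈ H^{2 dim X}(X;ℚ)` -/
  fundCls : H
  /-- duality: `b_l ⌣ b_l^* = [X]` -/
  dual_pair : ∀ l, b l * bdual l = fundCls
  /-- the Križ model `E(X,n)`, a (bi)graded-commutative dg-algebra -/
  E : ℕ → Type
  [ringE : ∀ n, Ring (E n)]
  [algE : ∀ n, Algebra ℚ (E n)]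
  /-- `x ↦ x_i`, the pullback of `x ∈ H^•(X;ℚ)` along the `i`-th projection `X^n → X` -/
  xcl : ∀ {n : ℕ}, Fin n → (H →ₐ[ℚ] E n)
  /-- the exterior generators `G_{i,j}` of degree `(0, 2 dim_ℂ X − 1)` -/
  G : ∀ {n : ℕ}, Fin n → Fin n → E n
  /-- for `i > j` one sets `G_{i,j} = G_{j,i}` -/
  G_symm : ∀ {n : ℕ} (i j : Fin n), G i j = G j i
  /-- the `F`-module structure maps `f_* : E(X,n) → E(X,m)` (algebra morphisms) -/
  fStar : ∀ {n m : ℕ}, (Fin n → Fin m) → (E n →ₐ[ℚ] E m)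
  fStar_id : ∀ {n : ℕ}, fStar (id : Fin n → Fin n) = AlgHom.id ℚ (E n)
  fStar_comp : ∀ {n m r : ℕ} (f : Fin n → Fin m) (g : Fin m → Fin r),
      fStar (g ∘ f) = (fStar g).comp (fStar f)
  /-- `f_*(x_i) = x_{f i}` -/
  fStar_x : ∀ {n m : ℕ} (f : Fin n → Fin m) (i : Fin n) (x : H),
      fStar f (xcl i x) = xcl (f i) x
  /-- `f_*(G_{i,j}) = G_{f i, f j}` if `f i ≠ f j`, and `0` otherwise -/
  fStar_G : ∀ {n m : ℕ} (f : Fin n → Fin m) (i j : Fin n),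
      fStar f (G i j) = if f i = f j then 0 else G (f i) (f j)
  /-- the differential of the Križ model -/
  d : ∀ {n : ℕ}, E n →ₗ[ℚ] E n
  /-- `d(x_i) = 0` -/
  d_x : ∀ {n : ℕ} (i : Fin n) (x : H), d (xcl i x) = 0
  /-- `d(G_{i,j}) = Δ_{i,j} = Σ_l (−1)^(deg b_l^*) (b_l)_i (b_l^*)_j` -/
  d_G : ∀ {n : ℕ} (i j : Fin n), i ≠ j →
      d (G i j) =
        ∑ l, ((-1 : ℚ)) ^ (2 * dimX - bdeg l) • (xcl i (b l) * xcl j (bdual l))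

attribute [instance] KrizModelData.ringH KrizModelData.algH KrizModelData.fintι
  KrizModelData.ringE KrizModelData.algE

/-- The Euler characteristic `χ(X) = Σ_r (−1)^r h_r(X)`, computed from a graded
basis of `H^•(X;ℚ)`. -/
noncomputable def KrizModelData.euler (K : KrizModelData) : ℚ :=
  ∑ l, ((-1 : ℚ)) ^ (K.bdeg l)

lemma neg_one_pow_two_mul_sub {R : Type*} [Monoid R] [HasDistribNeg R] {d k : ℕ}
    (h : k ≤ 2 * d) : (-1 : R) ^ (2 * d - k) = (-1) ^ k :=
  neg_one_pow_congr (by simp [Nat.even_sub h, parity_simps])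

namespace KrizModelData

variable (K : KrizModelData)

/-- The pullback `Δ_{i,j}` of the diagonal class, defined for all `i, j`; it equals
`d G_{i,j}` only when `i ≠ j`. -/
noncomputable def diagonalClass {n : ℕ} (i j : Fin n) : K.E n :=
  ∑ l, ((-1 : ℚ)) ^ (2 * K.dimX - K.bdeg l) • (K.xcl i (K.b l) * K.xcl j (K.bdual l))

lemma d_G_eq_diagonalClass {n : ℕ} {i j : Fin n} (hij : i ≠ j) :
    K.d (K.G i j) = K.diagonalClass i j :=
  K.d_G i j hij

lemma fStar_diagonalClass {n m : ℕ} (f : Fin n → Fin m) (i j : Fin n) :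
    K.fStar f (K.diagonalClass i j) = K.diagonalClass (f i) (f j) := by
  simp only [diagonalClass, map_sum, map_smul, map_mul, K.fStar_x]

/-- Restricting `Δ` to the diagonal gives the Euler class: `b_l b_l^* = [X]`, and the sign
`(−1)^(deg b_l^*)` equals `(−1)^(deg b_l)` because the two degrees add up to `2 dim X`. -/
lemma diagonalClass_self {n : ℕ} (i : Fin n) :
    K.diagonalClass i i = K.euler • K.xcl i K.fundCls := by
  simp only [diagonalClass, euler, Finset.sum_smul, ← map_mul, K.dual_pair,
    neg_one_pow_two_mul_sub (K.bdeg_le _)]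

lemma fStar_d_xcl {n m : ℕ} (f : Fin n → Fin m) (i : Fin n) (x : K.H) :
    K.fStar f (K.d (K.xcl i x)) = K.d (K.fStar f (K.xcl i x)) := by
  rw [K.d_x, map_zero, K.fStar_x, K.d_x]

lemma fStar_d_G_of_eq {n m : ℕ} (f : Fin n → Fin m) {i j : Fin n} (hij : i ≠ j)
    (hf : f i = f j) : K.fStar f (K.d (K.G i j)) = K.euler • K.xcl (f i) K.fundCls := by
  rw [K.d_G_eq_diagonalClass hij, fStar_diagonalClass, ← hf, diagonalClass_self]

lemma fStar_d_G_of_ne {n m : ℕ} (f : Fin n → Fin m) {i j : Fin n} (hij : i ≠ j)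
    (hf : f i ≠ f j) : K.fStar f (K.d (K.G i j)) = K.d (K.fStar f (K.G i j)) := by
  rw [K.fStar_G, if_neg hf, K.d_G_eq_diagonalClass hij, K.d_G_eq_diagonalClass hf,
    fStar_diagonalClass]

end KrizModelData

/-- if `χ(X) = 0`, then the differential `d` commutes with `f_*` for every
map of sets `f : [n] → [m]` (on the generators `G_{i,j}`, and trivially on the `x_i`,
hence everywhere); equivalently, for `i < j` with `f i = f j` one has
`f_*(d(G_{i,j})) = χ(X) · [X]_{f i} = 0`. -/
theorem kriz_differential_is_F_module_morphism (K : KrizModelData)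
    (hχ : K.euler = 0) :
    (∀ {n m : ℕ} (f : Fin n → Fin m) (i : Fin n) (x : K.H),
        K.fStar f (K.d (K.xcl i x)) = K.d (K.fStar f (K.xcl i x))) ∧
    (∀ {n m : ℕ} (f : Fin n → Fin m) (i j : Fin n), i ≠ j →
        K.fStar f (K.d (K.G i j)) = K.d (K.fStar f (K.G i j))) ∧
    (∀ {n m : ℕ} (f : Fin n → Fin m) (i j : Fin n), i < j → f i = f j →
        K.fStar f (K.d (K.G i j)) = K.euler • K.xcl (f i) K.fundCls ∧
        K.fStar f (K.d (K.G i j)) = 0) := by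
  have h_collapse {n m : ℕ} (f : Fin n → Fin m) {i j : Fin n} (hij : i ≠ j)
      (hf : f i = f j) : K.fStar f (K.d (K.G i j)) = 0 := by
    rw [K.fStar_d_G_of_eq f hij hf, hχ, zero_smul]
  refine ⟨K.fStar_d_xcl, fun f i j hij => ?_, fun f i j hij hf =>
    ⟨K.fStar_d_G_of_eq f hij.ne hf, h_collapse f hij.ne hf⟩⟩
  by_cases hf : f i = f j
  · rw [h_collapse f hij hf, K.fStar_G, if_pos hf, map_zero]
  · exact K.fStar_d_G_of_ne f hij hf
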